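/- For every n ≥ 0 and all z, w ∈ ℂ, the Poisson brackets {A_n(z), A_n(w)} = 0 and {B_n(z), B_n(w)} = 0. -/

import Mathlib

open Complex

/-- Derivative of `f` in the direction of the real part of the `k`-th variable α_k. -/
noncomputable def duDeriv (k : ℕ) (f : (ℕ → ℂ) → ℂ) (a : ℕ → ℂ) : ℂ :=
  deriv (fun t : ℝ => f (Function.update a k (a k + (t : ℂ)))) 0

/-- Derivative of `f` in the direction of the imaginary part of the `k`-th variable α_k. -/
noncomputable def dvDeriv (k : ℕ) (f : (ℕ → ℂ) → ℂ) (a : ℕ → ℂ) : ℂ :=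
  deriv (fun t : ℝ => f (Function.update a k (a k + (t : ℂ) * Complex.I))) 0

/-- Wirtinger derivative ∂f/∂α_k = (1/2)(∂/∂u_k − i·∂/∂v_k). -/
noncomputable def dAlpha (k : ℕ) (f : (ℕ → ℂ) → ℂ) (a : ℕ → ℂ) : ℂ :=
  (1 / 2) * (duDeriv k f a - Complex.I * dvDeriv k f a)

/-- Wirtinger derivative ∂f/∂conj(α_k) = (1/2)(∂/∂u_k + i·∂/∂v_k). -/
noncomputable def dAlphaBar (k : ℕ) (f : (ℕ → ℂ) → ℂ) (a : ℕ → ℂ) : ℂ :=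
  (1 / 2) * (duDeriv k f a + Complex.I * dvDeriv k f a)

/-- The Poisson bracket
{f,g} = i·Σ_k (1 − |α_k|²)·[(∂f/∂conj(α_k))·(∂g/∂α_k) − (∂f/∂α_k)·(∂g/∂conj(α_k))]. -/
noncomputable def pb (f g : (ℕ → ℂ) → ℂ) (a : ℕ → ℂ) : ℂ :=
  Complex.I * ∑' k : ℕ, (1 - (Complex.normSq (a k) : ℂ)) *
    (dAlphaBar k f a * dAlpha k g a - dAlpha k f a * dAlphaBar k g a)

/-- The quadruple ((A_n(z), B_n(z)), (A_n^*(z), B_n^*(z))) of Wall polynomials: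
A_0(z) = α_0, B_0(z) = 1, A_0^*(z) = conj(α_0), B_0^*(z) = 1,
A_{n+1}(z) = A_n(z) + α_{n+1}·z·B_n^*(z), B_{n+1}(z) = B_n(z) + α_{n+1}·z·A_n^*(z),
A_{n+1}^*(z) = z·A_n^*(z) + conj(α_{n+1})·B_n(z),
B_{n+1}^*(z) = z·B_n^*(z) + conj(α_{n+1})·A_n(z). -/
noncomputable def WallP : ℕ → ℂ → (ℕ → ℂ) → (ℂ × ℂ) × ℂ × ℂ
  | 0, _, a => ((a 0, 1), (starRingEnd ℂ) (a 0), 1)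
  | n + 1, z, a =>
      (((WallP n z a).1.1 + a (n + 1) * z * (WallP n z a).2.2,
        (WallP n z a).1.2 + a (n + 1) * z * (WallP n z a).2.1),
       z * (WallP n z a).2.1 + (starRingEnd ℂ) (a (n + 1)) * (WallP n z a).1.2,
       z * (WallP n z a).2.2 + (starRingEnd ℂ) (a (n + 1)) * (WallP n z a).1.1)

/-- The Wall polynomial A_n(z). -/
noncomputable def WallA (n : ℕ) (z : ℂ) (a : ℕ → ℂ) : ℂ := (WallP n z a).1.1

/-- The Wall polynomial B_n(z). -/
noncomputable def WallB (n : ℕ) (z : ℂ) (a : ℕ → ℂ) : ℂ := (WallP n z a).1.2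

/-- The reversed Wall polynomial A_n^*(z). -/
noncomputable def WallAStar (n : ℕ) (z : ℂ) (a : ℕ → ℂ) : ℂ := (WallP n z a).2.1

/-- The reversed Wall polynomial B_n^*(z). -/
noncomputable def WallBStar (n : ℕ) (z : ℂ) (a : ℕ → ℂ) : ℂ := (WallP n z a).2.2

lemma affine_dAlpha (k : ℕ) (f : (ℕ → ℂ) → ℂ) (a : ℕ → ℂ) (c1 c2 : ℂ)
    (h : ∀ t : ℂ, f (Function.update a k t) =
      f (Function.update a k 0) + t * c1 + (starRingEnd ℂ) t * c2) :
    dAlpha k f a = c1 ∧ dAlphaBar k f a = c2 := by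
  have h0 : HasDerivAt (fun t : ℝ => ((t : ℝ) : ℂ)) 1 0 := by
    exact Complex.ofRealCLM.hasDerivAt
  set C : ℂ := f (Function.update a k 0) + a k * c1 + (starRingEnd ℂ) (a k) * c2 with hC
  have hu : duDeriv k f a = c1 + c2 := by
    unfold duDeriv
    have hfun : (fun t : ℝ => f (Function.update a k (a k + (t : ℂ)))) =
        fun t : ℝ => C + (c1 + c2) * (t : ℂ) := by
      funext t
      rw [h (a k + (t : ℂ)), map_add, Complex.conj_ofReal, hC]
      ring
    rw [hfun]
    have := ((h0.const_mul (c1 + c2)).const_add C).deriv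
    simpa using this
  have hv : dvDeriv k f a = (c1 - c2) * Complex.I := by
    unfold dvDeriv
    have hfun : (fun t : ℝ => f (Function.update a k (a k + (t : ℂ) * Complex.I))) =
        fun t : ℝ => C + ((c1 - c2) * Complex.I) * (t : ℂ) := by
      funext t
      rw [h (a k + (t : ℂ) * Complex.I), map_add, map_mul, Complex.conj_ofReal,
        Complex.conj_I, hC]
      ring
    rw [hfun]
    have := ((h0.const_mul ((c1 - c2) * Complex.I)).const_add C).deriv
    simpa using this
  constructor
  · unfold dAlpha
    rw [hu, hv]
    linear_combination (-(c1 - c2) / 2) * Complex.I_mul_I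
  · unfold dAlphaBar
    rw [hu, hv]
    linear_combination ((c1 - c2) / 2) * Complex.I_mul_I

noncomputable def stepQ (α z : ℂ) (d : (ℂ × ℂ) × ℂ × ℂ) : (ℂ × ℂ) × ℂ × ℂ :=
  ((d.1.1 + α * z * d.2.2, d.1.2 + α * z * d.2.1),
   z * d.2.1 + (starRingEnd ℂ) α * d.1.2,
   z * d.2.2 + (starRingEnd ℂ) α * d.1.1)

noncomputable def DP (k : ℕ) (z : ℂ) (a : ℕ → ℂ) : ℕ → ((ℂ × ℂ) × ℂ × ℂ) × ((ℂ × ℂ) × ℂ × ℂ)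
  | 0 => if k = 0 then (((1, 0), 0, 0), ((0, 0), 1, 0)) else 0
  | n + 1 =>
      if k = n + 1 then
        (((z * WallBStar n z a, z * WallAStar n z a), 0, 0),
         ((0, 0), WallB n z a, WallA n z a))
      else
        (stepQ (a (n + 1)) z (DP k z a n).1, stepQ (a (n + 1)) z (DP k z a n).2)

lemma DP_succ_eq (n : ℕ) (z : ℂ) (a : ℕ → ℂ) :
    DP (n + 1) z a (n + 1) =
      (((z * WallBStar n z a, z * WallAStar n z a), 0, 0),
       ((0, 0), WallB n z a, WallA n z a)) := by
  simp [DP]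

lemma DP_succ_ne_1 {k n : ℕ} (h : k ≠ n + 1) (z : ℂ) (a : ℕ → ℂ) :
    (DP k z a (n + 1)).1 = stepQ (a (n + 1)) z (DP k z a n).1 := by
  simp [DP, h]

lemma DP_succ_ne_2 {k n : ℕ} (h : k ≠ n + 1) (z : ℂ) (a : ℕ → ℂ) :
    (DP k z a (n + 1)).2 = stepQ (a (n + 1)) z (DP k z a n).2 := by
  simp [DP, h]

lemma DP_zero_eq (z : ℂ) (a : ℕ → ℂ) :
    DP 0 z a 0 = (((1, 0), 0, 0), ((0, 0), 1, 0)) := by simp [DP]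

/-- The bilinear Poisson-bracket sum for two coordinate selectors. -/
noncomputable def Sb (p q : (ℂ × ℂ) × ℂ × ℂ → ℂ) (n : ℕ) (z w : ℂ) (a : ℕ → ℂ) : ℂ :=
  ∑ k ∈ Finset.range (n + 1), (1 - (Complex.normSq (a k) : ℂ)) *
    (p (DP k z a n).2 * q (DP k w a n).1 - p (DP k z a n).1 * q (DP k w a n).2)

lemma main_ind (a : ℕ → ℂ) (u v : (ℂ × ℂ) × ℂ × ℂ → ℂ) (F G : ℕ → ℂ → ℂ)
    (hu : ∀ (α ζ : ℂ) (d : (ℂ × ℂ) × ℂ × ℂ), u (stepQ α ζ d) = u d + α * ζ * v d)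
    (hv : ∀ (α ζ : ℂ) (d : (ℂ × ℂ) × ℂ × ℂ),
      v (stepQ α ζ d) = ζ * v d + (starRingEnd ℂ) α * u d)
    (h0 : u (((0 : ℂ), (0 : ℂ)), (1 : ℂ), (0 : ℂ)) * v (((1 : ℂ), (0 : ℂ)), (0 : ℂ), (0 : ℂ))
        - u (((1 : ℂ), (0 : ℂ)), (0 : ℂ), (0 : ℂ)) * v (((0 : ℂ), (0 : ℂ)), (1 : ℂ), (0 : ℂ)) = 0)
    (h0' : v (((0 : ℂ), (0 : ℂ)), (1 : ℂ), (0 : ℂ)) * u (((1 : ℂ), (0 : ℂ)), (0 : ℂ), (0 : ℂ))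
        - v (((1 : ℂ), (0 : ℂ)), (0 : ℂ), (0 : ℂ)) * u (((0 : ℂ), (0 : ℂ)), (1 : ℂ), (0 : ℂ)) = 0)
    (hFG0 : ∀ z w : ℂ, G 0 z * F 0 w - G 0 w * F 0 z = 0)
    (hbu1 : ∀ (n : ℕ) (z : ℂ), u (DP (n + 1) z a (n + 1)).1 = z * G n z)
    (hbu2 : ∀ (n : ℕ) (z : ℂ), u (DP (n + 1) z a (n + 1)).2 = 0)
    (hbv1 : ∀ (n : ℕ) (z : ℂ), v (DP (n + 1) z a (n + 1)).1 = 0)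
    (hbv2 : ∀ (n : ℕ) (z : ℂ), v (DP (n + 1) z a (n + 1)).2 = F n z)
    (hF : ∀ (n : ℕ) (z : ℂ), F (n + 1) z = F n z + a (n + 1) * z * G n z)
    (hG : ∀ (n : ℕ) (z : ℂ), G (n + 1) z = z * G n z + (starRingEnd ℂ) (a (n + 1)) * F n z) :
    ∀ (n : ℕ) (z w : ℂ),
      Sb u u n z w a = 0 ∧ Sb v v n z w a = 0 ∧
      Sb v u n z w a = - Sb u v n w z a ∧
      w * Sb u v n z w a = z * Sb u v n w z a ∧
      (w - z) * Sb u v n z w a = z * (G n z * F n w - G n w * F n z) := by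
  intro n
  induction n with
  | zero =>
      intro z w
      refine ⟨?_, ?_, ?_, ?_, ?_⟩ <;>
        simp only [Sb, zero_add, Finset.sum_range_one, DP_zero_eq]
      · ring
      · ring
      · linear_combination (1 - (Complex.normSq (a 0) : ℂ)) * h0'
          + (1 - (Complex.normSq (a 0) : ℂ)) * h0
      · linear_combination (w * (1 - (Complex.normSq (a 0) : ℂ))
          - z * (1 - (Complex.normSq (a 0) : ℂ))) * h0
      · linear_combination ((w - z) * (1 - (Complex.normSq (a 0) : ℂ))) * h0 - z * hFG0 z w
  | succ n ih =>
      have h1 : ∀ z w : ℂ, Sb u u n z w a = 0 := fun z w => (ih z w).1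
      have h2 : ∀ z w : ℂ, Sb v v n z w a = 0 := fun z w => (ih z w).2.1
      have h3 : ∀ z w : ℂ, Sb v u n z w a = - Sb u v n w z a := fun z w => (ih z w).2.2.1
      have h4 : ∀ z w : ℂ, w * Sb u v n z w a = z * Sb u v n w z a :=
        fun z w => (ih z w).2.2.2.1
      have h5 : ∀ z w : ℂ, (w - z) * Sb u v n z w a = z * (G n z * F n w - G n w * F n z) :=
        fun z w => (ih z w).2.2.2.2
      have EUU : ∀ z' w' : ℂ, Sb u u (n + 1) z' w' a
          = Sb u u n z' w' a + a (n + 1) * w' * Sb u v n z' w' a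
            + a (n + 1) * z' * Sb v u n z' w' a
            + a (n + 1) * a (n + 1) * (z' * w') * Sb v v n z' w' a := by
        intro z' w'
        simp only [Sb]
        rw [Finset.sum_range_succ, hbu1 n z', hbu1 n w', hbu2 n z', hbu2 n w']
        have hc : ∀ k ∈ Finset.range (n + 1),
            (1 - (Complex.normSq (a k) : ℂ)) *
              (u (DP k z' a (n + 1)).2 * u (DP k w' a (n + 1)).1
                - u (DP k z' a (n + 1)).1 * u (DP k w' a (n + 1)).2)
            = (1 - (Complex.normSq (a k) : ℂ)) *
                (u (DP k z' a n).2 * u (DP k w' a n).1 - u (DP k z' a n).1 * u (DP k w' a n).2)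
              + a (n + 1) * w' * ((1 - (Complex.normSq (a k) : ℂ)) *
                (u (DP k z' a n).2 * v (DP k w' a n).1 - u (DP k z' a n).1 * v (DP k w' a n).2))
              + a (n + 1) * z' * ((1 - (Complex.normSq (a k) : ℂ)) *
                (v (DP k z' a n).2 * u (DP k w' a n).1 - v (DP k z' a n).1 * u (DP k w' a n).2))
              + a (n + 1) * a (n + 1) * (z' * w') * ((1 - (Complex.normSq (a k) : ℂ)) *
                (v (DP k z' a n).2 * v (DP k w' a n).1 - v (DP k z' a n).1 * v (DP k w' a n).2)) := by
          intro k hk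
          have hkne : k ≠ n + 1 := by have := Finset.mem_range.1 hk; omega
          rw [DP_succ_ne_1 hkne z' a, DP_succ_ne_2 hkne z' a,
            DP_succ_ne_1 hkne w' a, DP_succ_ne_2 hkne w' a]
          simp only [hu, hv]
          ring
        rw [Finset.sum_congr rfl hc]
        simp only [Finset.sum_add_distrib, ← Finset.mul_sum]
        ring
      have EVV : ∀ z' w' : ℂ, Sb v v (n + 1) z' w' a
          = z' * w' * Sb v v n z' w' a
            + z' * (starRingEnd ℂ) (a (n + 1)) * Sb v u n z' w' a
            + (starRingEnd ℂ) (a (n + 1)) * w' * Sb u v n z' w' a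
            + (starRingEnd ℂ) (a (n + 1)) * (starRingEnd ℂ) (a (n + 1)) * Sb u u n z' w' a := by
        intro z' w'
        simp only [Sb]
        rw [Finset.sum_range_succ, hbv1 n z', hbv1 n w', hbv2 n z', hbv2 n w']
        have hc : ∀ k ∈ Finset.range (n + 1),
            (1 - (Complex.normSq (a k) : ℂ)) *
              (v (DP k z' a (n + 1)).2 * v (DP k w' a (n + 1)).1
                - v (DP k z' a (n + 1)).1 * v (DP k w' a (n + 1)).2)
            = z' * w' * ((1 - (Complex.normSq (a k) : ℂ)) *
                (v (DP k z' a n).2 * v (DP k w' a n).1 - v (DP k z' a n).1 * v (DP k w' a n).2))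
              + z' * (starRingEnd ℂ) (a (n + 1)) * ((1 - (Complex.normSq (a k) : ℂ)) *
                (v (DP k z' a n).2 * u (DP k w' a n).1 - v (DP k z' a n).1 * u (DP k w' a n).2))
              + (starRingEnd ℂ) (a (n + 1)) * w' * ((1 - (Complex.normSq (a k) : ℂ)) *
                (u (DP k z' a n).2 * v (DP k w' a n).1 - u (DP k z' a n).1 * v (DP k w' a n).2))
              + (starRingEnd ℂ) (a (n + 1)) * (starRingEnd ℂ) (a (n + 1)) *
                ((1 - (Complex.normSq (a k) : ℂ)) *
                (u (DP k z' a n).2 * u (DP k w' a n).1 - u (DP k z' a n).1 * u (DP k w' a n).2)) := by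
          intro k hk
          have hkne : k ≠ n + 1 := by have := Finset.mem_range.1 hk; omega
          rw [DP_succ_ne_1 hkne z' a, DP_succ_ne_2 hkne z' a,
            DP_succ_ne_1 hkne w' a, DP_succ_ne_2 hkne w' a]
          simp only [hu, hv]
          ring
        rw [Finset.sum_congr rfl hc]
        simp only [Finset.sum_add_distrib, ← Finset.mul_sum]
        ring
      have EUV : ∀ z' w' : ℂ, Sb u v (n + 1) z' w' a
          = w' * Sb u v n z' w' a + (starRingEnd ℂ) (a (n + 1)) * Sb u u n z' w' a
            + a (n + 1) * (z' * w') * Sb v v n z' w' a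
            + a (n + 1) * (starRingEnd ℂ) (a (n + 1)) * z' * Sb v u n z' w' a
            - (1 - (Complex.normSq (a (n + 1)) : ℂ)) * (z' * G n z' * F n w') := by
        intro z' w'
        simp only [Sb]
        rw [Finset.sum_range_succ, hbu1 n z', hbu2 n z', hbv1 n w', hbv2 n w']
        have hc : ∀ k ∈ Finset.range (n + 1),
            (1 - (Complex.normSq (a k) : ℂ)) *
              (u (DP k z' a (n + 1)).2 * v (DP k w' a (n + 1)).1
                - u (DP k z' a (n + 1)).1 * v (DP k w' a (n + 1)).2)
            = w' * ((1 - (Complex.normSq (a k) : ℂ)) *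
                (u (DP k z' a n).2 * v (DP k w' a n).1 - u (DP k z' a n).1 * v (DP k w' a n).2))
              + (starRingEnd ℂ) (a (n + 1)) * ((1 - (Complex.normSq (a k) : ℂ)) *
                (u (DP k z' a n).2 * u (DP k w' a n).1 - u (DP k z' a n).1 * u (DP k w' a n).2))
              + a (n + 1) * (z' * w') * ((1 - (Complex.normSq (a k) : ℂ)) *
                (v (DP k z' a n).2 * v (DP k w' a n).1 - v (DP k z' a n).1 * v (DP k w' a n).2))
              + a (n + 1) * (starRingEnd ℂ) (a (n + 1)) * z' *
                ((1 - (Complex.normSq (a k) : ℂ)) *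
                (v (DP k z' a n).2 * u (DP k w' a n).1 - v (DP k z' a n).1 * u (DP k w' a n).2)) := by
          intro k hk
          have hkne : k ≠ n + 1 := by have := Finset.mem_range.1 hk; omega
          rw [DP_succ_ne_1 hkne z' a, DP_succ_ne_2 hkne z' a,
            DP_succ_ne_1 hkne w' a, DP_succ_ne_2 hkne w' a]
          simp only [hu, hv]
          ring
        rw [Finset.sum_congr rfl hc]
        simp only [Finset.sum_add_distrib, ← Finset.mul_sum]
        ring
      have EVU : ∀ z' w' : ℂ, Sb v u (n + 1) z' w' a
          = z' * Sb v u n z' w' a + (starRingEnd ℂ) (a (n + 1)) * Sb u u n z' w' a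
            + a (n + 1) * (z' * w') * Sb v v n z' w' a
            + (starRingEnd ℂ) (a (n + 1)) * a (n + 1) * w' * Sb u v n z' w' a
            + (1 - (Complex.normSq (a (n + 1)) : ℂ)) * (w' * F n z' * G n w') := by
        intro z' w'
        simp only [Sb]
        rw [Finset.sum_range_succ, hbv1 n z', hbv2 n z', hbu1 n w', hbu2 n w']
        have hc : ∀ k ∈ Finset.range (n + 1),
            (1 - (Complex.normSq (a k) : ℂ)) *
              (v (DP k z' a (n + 1)).2 * u (DP k w' a (n + 1)).1
                - v (DP k z' a (n + 1)).1 * u (DP k w' a (n + 1)).2)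
            = z' * ((1 - (Complex.normSq (a k) : ℂ)) *
                (v (DP k z' a n).2 * u (DP k w' a n).1 - v (DP k z' a n).1 * u (DP k w' a n).2))
              + (starRingEnd ℂ) (a (n + 1)) * ((1 - (Complex.normSq (a k) : ℂ)) *
                (u (DP k z' a n).2 * u (DP k w' a n).1 - u (DP k z' a n).1 * u (DP k w' a n).2))
              + a (n + 1) * (z' * w') * ((1 - (Complex.normSq (a k) : ℂ)) *
                (v (DP k z' a n).2 * v (DP k w' a n).1 - v (DP k z' a n).1 * v (DP k w' a n).2))
              + (starRingEnd ℂ) (a (n + 1)) * a (n + 1) * w' *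
                ((1 - (Complex.normSq (a k) : ℂ)) *
                (u (DP k z' a n).2 * v (DP k w' a n).1 - u (DP k z' a n).1 * v (DP k w' a n).2)) := by
          intro k hk
          have hkne : k ≠ n + 1 := by have := Finset.mem_range.1 hk; omega
          rw [DP_succ_ne_1 hkne z' a, DP_succ_ne_2 hkne z' a,
            DP_succ_ne_1 hkne w' a, DP_succ_ne_2 hkne w' a]
          simp only [hu, hv]
          ring
        rw [Finset.sum_congr rfl hc]
        simp only [Finset.sum_add_distrib, ← Finset.mul_sum]
        ring
      intro z w
      refine ⟨?_, ?_, ?_, ?_, ?_⟩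
      · rw [EUU z w, h1 z w, h2 z w, h3 z w]
        linear_combination a (n + 1) * h4 z w
      · rw [EVV z w, h1 z w, h2 z w, h3 z w]
        linear_combination (starRingEnd ℂ) (a (n + 1)) * h4 z w
      · rw [EVU z w, EUV w z, h1 z w, h1 w z, h2 z w, h2 w z, h3 z w, h3 w z]
        ring
      · rw [EUV z w, EUV w z, h1 z w, h1 w z, h2 z w, h2 w z, h3 z w, h3 w z]
        linear_combination (z + a (n + 1) * (starRingEnd ℂ) (a (n + 1)) * w) * h4 z w
          + (1 - (Complex.normSq (a (n + 1)) : ℂ)) * w * h5 z w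
          - w * (w - z) * Sb u v n z w a * Complex.mul_conj (a (n + 1))
      · rw [EUV z w, hG n z, hG n w, hF n z, hF n w, h1 z w, h2 z w, h3 z w]
        linear_combination w * h5 z w + (Complex.normSq (a (n + 1)) : ℂ) * z * h5 w z
          + (-(w - z) * z * Sb u v n w z a - z * w * F n z * G n w + z * z * F n w * G n z) *
            Complex.mul_conj (a (n + 1))

lemma wallP_update (z : ℂ) (a : ℕ → ℂ) (t : ℂ) (k : ℕ) :
    ∀ n, n < k → WallP n z (Function.update a k t) = WallP n z a
  | 0, h => by
      simp [WallP, Function.update_of_ne (show (0:ℕ) ≠ k by omega)]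
  | n + 1, h => by
      have ih := wallP_update z a t k n (by omega)
      simp [WallP, Function.update_of_ne (show n + 1 ≠ k by omega), ih]


lemma DP_eq_zero (z : ℂ) (a : ℕ → ℂ) (k : ℕ) : ∀ n, n < k → DP k z a n = 0
  | 0, h => by
      have : k ≠ 0 := by omega
      simp [DP, this]
  | n + 1, h => by
      have h1 : k ≠ n + 1 := by omega
      have ih := DP_eq_zero z a k n (by omega)
      simp [DP, h1, ih, stepQ, Prod.ext_iff]


lemma wall_affine (n k : ℕ) (z : ℂ) (a : ℕ → ℂ) (t : ℂ) :
    (WallA n z (Function.update a k t) = WallA n z (Function.update a k 0)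
        + t * (DP k z a n).1.1.1 + (starRingEnd ℂ) t * (DP k z a n).2.1.1) ∧
    (WallB n z (Function.update a k t) = WallB n z (Function.update a k 0)
        + t * (DP k z a n).1.1.2 + (starRingEnd ℂ) t * (DP k z a n).2.1.2) ∧
    (WallAStar n z (Function.update a k t) = WallAStar n z (Function.update a k 0)
        + t * (DP k z a n).1.2.1 + (starRingEnd ℂ) t * (DP k z a n).2.2.1) ∧
    (WallBStar n z (Function.update a k t) = WallBStar n z (Function.update a k 0)
        + t * (DP k z a n).1.2.2 + (starRingEnd ℂ) t * (DP k z a n).2.2.2) := by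
  induction n with
  | zero =>
      by_cases hk : k = 0
      · subst hk
        refine ⟨?_, ?_, ?_, ?_⟩ <;>
          simp [WallA, WallB, WallAStar, WallBStar, WallP, DP]
      · refine ⟨?_, ?_, ?_, ?_⟩ <;>
          simp [WallA, WallB, WallAStar, WallBStar, WallP, DP, hk,
            Function.update_of_ne (show (0:ℕ) ≠ k from fun h => hk h.symm)]
  | succ m ih =>
      obtain ⟨ihA, ihB, ihAs, ihBs⟩ := ih
      by_cases hk : k = m + 1
      · subst hk
        have e1 : ∀ s : ℂ, WallP m z (Function.update a (m+1) s) = WallP m z a :=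
          fun s => wallP_update z a s (m+1) m (by omega)
        refine ⟨?_, ?_, ?_, ?_⟩ <;>
        · simp only [WallA, WallB, WallAStar, WallBStar, WallP, e1, DP_succ_eq,
            Function.update_self]
          simp [WallA, WallB, WallAStar, WallBStar, map_zero]
          try ring
      · have hupd : ∀ s : ℂ, Function.update a k s (m+1) = a (m+1) :=
          fun s => Function.update_of_ne (show m + 1 ≠ k from fun h => hk h.symm) s a
        simp only [WallA, WallB, WallAStar, WallBStar] at ihA ihB ihAs ihBs ⊢
        rw [DP_succ_ne_1 hk, DP_succ_ne_2 hk]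
        refine ⟨?_, ?_, ?_, ?_⟩
        · simp only [WallP, stepQ, hupd]
          linear_combination ihA + (a (m+1) * z) * ihBs
        · simp only [WallP, stepQ, hupd]
          linear_combination ihB + (a (m+1) * z) * ihAs
        · simp only [WallP, stepQ, hupd]
          linear_combination z * ihAs + (starRingEnd ℂ) (a (m+1)) * ihB
        · simp only [WallP, stepQ, hupd]
          linear_combination z * ihBs + (starRingEnd ℂ) (a (m+1)) * ihA


lemma dWallA (n k : ℕ) (z : ℂ) (a : ℕ → ℂ) :
    dAlpha k (WallA n z) a = (DP k z a n).1.1.1 ∧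
    dAlphaBar k (WallA n z) a = (DP k z a n).2.1.1 :=
  affine_dAlpha k (WallA n z) a _ _ (fun t => (wall_affine n k z a t).1)

lemma dWallB (n k : ℕ) (z : ℂ) (a : ℕ → ℂ) :
    dAlpha k (WallB n z) a = (DP k z a n).1.1.2 ∧
    dAlphaBar k (WallB n z) a = (DP k z a n).2.1.2 :=
  affine_dAlpha k (WallB n z) a _ _ (fun t => (wall_affine n k z a t).2.1)

theorem poisson_A_A (n : ℕ) (z w : ℂ) (a : ℕ → ℂ) (ha : ∀ k, ‖a k‖ < 1) :
    pb (WallA n z) (WallA n w) a = 0 ∧ pb (WallB n z) (WallB n w) a = 0 := by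
  constructor
  · -- the A case
    have key : Sb (fun d => d.1.1) (fun d => d.1.1) n z w a = 0 := by
      refine (main_ind a (fun d => d.1.1) (fun d => d.2.2)
        (fun m ζ => WallA m ζ a) (fun m ζ => WallBStar m ζ a)
        (fun α ζ d => rfl) (fun α ζ d => rfl) (by simp) (by simp)
        (fun z w => by simp [WallA, WallBStar, WallP])
        (fun m ζ => by rw [DP_succ_eq]) (fun m ζ => by rw [DP_succ_eq])
        (fun m ζ => by rw [DP_succ_eq]) (fun m ζ => by rw [DP_succ_eq])
        (fun m ζ => by simp [WallA, WallBStar, WallP])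
        (fun m ζ => by simp [WallA, WallB, WallBStar, WallP]) n z w).1
    have hzero : ∀ k ∉ Finset.range (n + 1),
        (1 - (Complex.normSq (a k) : ℂ)) *
          (dAlphaBar k (WallA n z) a * dAlpha k (WallA n w) a
            - dAlpha k (WallA n z) a * dAlphaBar k (WallA n w) a) = 0 := by
      intro k hk
      have hk' : n < k := by simp [Finset.mem_range] at hk; omega
      rw [(dWallA n k z a).1, (dWallA n k z a).2, (dWallA n k w a).1, (dWallA n k w a).2,
        DP_eq_zero z a k n hk', DP_eq_zero w a k n hk']
      simp
    unfold pb
    rw [tsum_eq_sum hzero]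
    have hsum : ∑ k ∈ Finset.range (n + 1), (1 - (Complex.normSq (a k) : ℂ)) *
          (dAlphaBar k (WallA n z) a * dAlpha k (WallA n w) a
            - dAlpha k (WallA n z) a * dAlphaBar k (WallA n w) a)
        = Sb (fun d => d.1.1) (fun d => d.1.1) n z w a := by
      unfold Sb
      refine Finset.sum_congr rfl fun k hk => ?_
      rw [(dWallA n k z a).1, (dWallA n k z a).2, (dWallA n k w a).1, (dWallA n k w a).2]
    rw [hsum, key, mul_zero]
  · -- the B case
    have key : Sb (fun d => d.1.2) (fun d => d.1.2) n z w a = 0 := by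
      refine (main_ind a (fun d => d.1.2) (fun d => d.2.1)
        (fun m ζ => WallB m ζ a) (fun m ζ => WallAStar m ζ a)
        (fun α ζ d => rfl) (fun α ζ d => rfl) (by simp) (by simp)
        (fun z w => by simp [WallB, WallAStar, WallP])
        (fun m ζ => by rw [DP_succ_eq]) (fun m ζ => by rw [DP_succ_eq])
        (fun m ζ => by rw [DP_succ_eq]) (fun m ζ => by rw [DP_succ_eq])
        (fun m ζ => by simp [WallB, WallAStar, WallP])
        (fun m ζ => by simp [WallB, WallAStar, WallP]) n z w).1
    have hzero : ∀ k ∉ Finset.range (n + 1),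
        (1 - (Complex.normSq (a k) : ℂ)) *
          (dAlphaBar k (WallB n z) a * dAlpha k (WallB n w) a
            - dAlpha k (WallB n z) a * dAlphaBar k (WallB n w) a) = 0 := by
      intro k hk
      have hk' : n < k := by simp [Finset.mem_range] at hk; omega
      rw [(dWallB n k z a).1, (dWallB n k z a).2, (dWallB n k w a).1, (dWallB n k w a).2,
        DP_eq_zero z a k n hk', DP_eq_zero w a k n hk']
      simp
    unfold pb
    rw [tsum_eq_sum hzero]
    have hsum : ∑ k ∈ Finset.range (n + 1), (1 - (Complex.normSq (a k) : ℂ)) *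
          (dAlphaBar k (WallB n z) a * dAlpha k (WallB n w) a
            - dAlpha k (WallB n z) a * dAlphaBar k (WallB n w) a)
        = Sb (fun d => d.1.2) (fun d => d.1.2) n z w a := by
      unfold Sb
      refine Finset.sum_congr rfl fun k hk => ?_
      rw [(dWallB n k z a).1, (dWallB n k z a).2, (dWallB n k w a).1, (dWallB n k w a).2]
    rw [hsum, key, mul_zero]
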